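/- arXiv:1907.05833 — 5 statements merged into one kernel-verified Lean document; each statement's English description precedes it below -/
import Mathlib

section
/- Let X be a d×d complex matrix with spectral norm σ = ‖X‖ and let n be a positive integer. Then ‖(I + (1/n)X)^n − e^X‖ ≤ (σ²/(2n))·e^σ, where e^X denotes the matrix exponential and ‖·‖ the spectral (operator) norm. -/
open scoped Matrix.Norms.L2Operator Nat

section Aux

variable {𝔸 : Type*} [NormedRing 𝔸] [NormedAlgebra ℂ 𝔸] [CompleteSpace 𝔸]

lemma real_exp_hasSum (r : ℝ) : HasSum (fun k : ℕ => r ^ k / k !) (Real.exp r) := by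
  rw [Real.exp_eq_exp_ℝ]
  exact NormedSpace.expSeries_div_hasSum_exp r

omit [NormedAlgebra ℂ 𝔸] [CompleteSpace 𝔸] in
lemma pow_norm_le (h1 : ‖(1 : 𝔸)‖ ≤ 1) (x : 𝔸) (k : ℕ) : ‖x ^ k‖ ≤ ‖x‖ ^ k := by
  cases k with
  | zero => simpa using h1
  | succ m => exact norm_pow_le' x m.succ_pos

lemma term_norm_le (h1 : ‖(1 : 𝔸)‖ ≤ 1) (x : 𝔸) (k : ℕ) :
    ‖((k ! : ℂ))⁻¹ • x ^ k‖ ≤ ‖x‖ ^ k / k ! := by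
  rw [norm_smul]
  have hn : ‖((k ! : ℂ))⁻¹‖ = ((k !) : ℝ)⁻¹ := by
    rw [norm_inv]; norm_num
  rw [hn, div_eq_inv_mul]
  gcongr
  exact pow_norm_le h1 x k

lemma aux_norm_exp_le (h1 : ‖(1 : 𝔸)‖ ≤ 1) (x : 𝔸) :
    ‖NormedSpace.exp x‖ ≤ Real.exp ‖x‖ := by
  rw [NormedSpace.exp_eq_tsum ℂ]
  refine (norm_tsum_le_tsum_norm (NormedSpace.norm_expSeries_summable' x)).trans ?_
  calc ∑' k : ℕ, ‖((k ! : ℂ))⁻¹ • x ^ k‖ ≤ ∑' k : ℕ, ‖x‖ ^ k / k ! :=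
        Summable.tsum_le_tsum (term_norm_le h1 x) (NormedSpace.norm_expSeries_summable' x)
          (real_exp_hasSum ‖x‖).summable
    _ = Real.exp ‖x‖ := (real_exp_hasSum ‖x‖).tsum_eq

lemma aux_exp_sub_le (h1 : ‖(1 : 𝔸)‖ ≤ 1) (x : 𝔸) :
    ‖NormedSpace.exp x - 1 - x‖ ≤ ‖x‖ ^ 2 / 2 * Real.exp ‖x‖ := by
  have hsum := NormedSpace.exp_series_hasSum_exp' (𝕂 := ℂ) x
  have h2 := (hasSum_nat_add_iff' (f := fun k : ℕ => ((k ! : ℂ))⁻¹ • x ^ k) 2).mpr hsum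
  have hrange : ∑ i ∈ Finset.range 2, ((i ! : ℂ))⁻¹ • x ^ i = 1 + x := by
    simp [Finset.sum_range_succ]
  rw [hrange] at h2
  have heq : NormedSpace.exp x - 1 - x = ∑' k : ℕ, ((((k + 2)) ! : ℂ))⁻¹ • x ^ (k + 2) := by
    rw [h2.tsum_eq, sub_sub]
  rw [heq]
  have hbig : HasSum (fun k : ℕ => ‖x‖ ^ 2 / 2 * (‖x‖ ^ k / k !))
      (‖x‖ ^ 2 / 2 * Real.exp ‖x‖) := (real_exp_hasSum ‖x‖).mul_left _
  have hterm : ∀ k : ℕ, ‖((((k + 2)) ! : ℂ))⁻¹ • x ^ (k + 2)‖ ≤ ‖x‖ ^ 2 / 2 * (‖x‖ ^ k / k !) := by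
    intro k
    refine (term_norm_le h1 x (k + 2)).trans ?_
    have hfacn : 2 * k ! ≤ (k + 2)! := by
      rw [Nat.factorial_succ, Nat.factorial_succ]
      exact Nat.mul_le_mul (by omega) (Nat.le_mul_of_pos_left _ (by omega))
    have hfac : (2 : ℝ) * k ! ≤ (k + 2)! := by exact_mod_cast hfacn
    have hre : ‖x‖ ^ 2 / 2 * (‖x‖ ^ k / k !) = ‖x‖ ^ (k + 2) / (2 * k !) := by
      rw [pow_add]; ring
    rw [hre]
    exact div_le_div_of_nonneg_left (by positivity) (by positivity) hfac
  have hns : Summable fun k : ℕ => ‖((((k + 2)) ! : ℂ))⁻¹ • x ^ (k + 2)‖ := by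
    refine Summable.of_nonneg_of_le (fun k => norm_nonneg _) hterm hbig.summable
  refine (norm_tsum_le_tsum_norm hns).trans ?_
  exact (Summable.tsum_le_tsum hterm hns hbig.summable).trans hbig.tsum_eq.le

end Aux

section Aux2
variable {𝔸 : Type*} [NormedRing 𝔸] [NormedAlgebra ℂ 𝔸] [CompleteSpace 𝔸]

omit [NormedAlgebra ℂ 𝔸] [CompleteSpace 𝔸] in
lemma aux_pow_sub_pow (h1 : ‖(1 : 𝔸)‖ ≤ 1) (a b : 𝔸) {M : ℝ} (ha : ‖a‖ ≤ M) (hb : ‖b‖ ≤ M)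
    (n : ℕ) : ‖a ^ n - b ^ n‖ ≤ n * M ^ (n - 1) * ‖a - b‖ := by
  have hM0 : 0 ≤ M := le_trans (norm_nonneg a) ha
  induction n with
  | zero => simp
  | succ m ih =>
    have key : a ^ (m + 1) - b ^ (m + 1) = a ^ m * (a - b) + (a ^ m - b ^ m) * b := by
      noncomm_ring
    have han : ‖a ^ m‖ ≤ M ^ m := (pow_norm_le h1 a m).trans (pow_le_pow_left₀ (norm_nonneg a) ha m)
    have step : ‖a ^ (m + 1) - b ^ (m + 1)‖ ≤ M ^ m * ‖a - b‖ + (m * M ^ (m - 1) * ‖a - b‖) * M := by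
      rw [key]
      refine (norm_add_le _ _).trans (add_le_add ?_ ?_)
      · exact (norm_mul_le _ _).trans (by gcongr)
      · exact (norm_mul_le _ _).trans (by gcongr)
    refine step.trans ?_
    have hMM : (m : ℝ) * M ^ (m - 1) * M = m * M ^ m := by
      cases m with
      | zero => simp
      | succ p => rw [Nat.add_sub_cancel, pow_succ]; ring
    push_cast
    nlinarith [norm_nonneg (a - b), hMM]
end Aux2

theorem stmt0 (d n : ℕ) (hn : 0 < n) (X : Matrix (Fin d) (Fin d) ℂ) :
    ‖((1 : Matrix (Fin d) (Fin d) ℂ) + (n : ℂ)⁻¹ • X) ^ n - NormedSpace.exp X‖ ≤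
      ‖X‖ ^ 2 / (2 * n) * Real.exp ‖X‖ := by
  have hn' : (n : ℝ) ≠ 0 := Nat.cast_ne_zero.mpr hn.ne'
  have hnC : (n : ℂ) ≠ 0 := Nat.cast_ne_zero.mpr hn.ne'
  set Y : Matrix (Fin d) (Fin d) ℂ := (n : ℂ)⁻¹ • X with hYdef
  have h1 : ‖(1 : Matrix (Fin d) (Fin d) ℂ)‖ ≤ 1 := by
    rw [Matrix.cstar_norm_def, map_one]
    exact ContinuousLinearMap.norm_id_le
  have hYnorm : ‖Y‖ = ‖X‖ / n := by
    rw [hYdef, norm_smul, norm_inv]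
    simp [div_eq_inv_mul]
  have hexpX : NormedSpace.exp X = (NormedSpace.exp Y) ^ n := by
    letI : NormedAlgebra ℚ (Matrix (Fin d) (Fin d) ℂ) := NormedAlgebra.restrictScalars ℚ ℂ _
    rw [← NormedSpace.exp_nsmul]
    congr 1
    rw [← Nat.cast_smul_eq_nsmul ℂ, hYdef, smul_smul, mul_inv_cancel₀ hnC, one_smul]
  have hA : ‖(1 : Matrix (Fin d) (Fin d) ℂ) + Y‖ ≤ Real.exp ‖Y‖ := by
    refine (norm_add_le _ _).trans ?_
    have := Real.add_one_le_exp ‖Y‖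
    linarith
  have hB : ‖NormedSpace.exp Y‖ ≤ Real.exp ‖Y‖ := aux_norm_exp_le h1 Y
  have hdiff : ‖(1 : Matrix (Fin d) (Fin d) ℂ) + Y - NormedSpace.exp Y‖
      ≤ ‖Y‖ ^ 2 / 2 * Real.exp ‖Y‖ := by
    have : (1 : Matrix (Fin d) (Fin d) ℂ) + Y - NormedSpace.exp Y
        = -(NormedSpace.exp Y - 1 - Y) := by abel
    rw [this, norm_neg]
    exact aux_exp_sub_le h1 Y
  have main := aux_pow_sub_pow h1 (1 + Y) (NormedSpace.exp Y) hA hB n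
  rw [hexpX]
  refine main.trans ?_
  have step : (n : ℝ) * Real.exp ‖Y‖ ^ (n - 1) * ‖1 + Y - NormedSpace.exp Y‖
      ≤ n * Real.exp ‖Y‖ ^ (n - 1) * (‖Y‖ ^ 2 / 2 * Real.exp ‖Y‖) := by
    gcongr
  refine step.trans (le_of_eq ?_)
  have hpow : Real.exp ‖Y‖ ^ (n - 1) * Real.exp ‖Y‖ = Real.exp ‖X‖ := by
    rw [← pow_succ, Nat.sub_add_cancel hn, ← Real.exp_nat_mul, hYnorm,
      mul_div_cancel₀ _ hn']
  calc (n : ℝ) * Real.exp ‖Y‖ ^ (n - 1) * (‖Y‖ ^ 2 / 2 * Real.exp ‖Y‖)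
      = (n : ℝ) * (‖Y‖ ^ 2 / 2) * (Real.exp ‖Y‖ ^ (n - 1) * Real.exp ‖Y‖) := by ring
    _ = ‖X‖ ^ 2 / (2 * n) * Real.exp ‖X‖ := by
        rw [hpow, hYnorm]
        field_simp
end

section
/- Let L > 0 and let k₀ be a natural number with k₀ ≥ 3 and k₀ ≥ L·e², and suppose k₀ ≥ log(n) for a positive integer n with k₀ = ⌈log n⌉. Then (L·e/k₀)^{k₀} ≤ L·e/n. -/
theorem stmt4 (L : ℝ) (hL : 0 < L) (k₀ n : ℕ) (hn : 0 < n)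
    (hk3 : 3 ≤ k₀) (hkL : L * Real.exp 1 ^ 2 ≤ k₀)
    (hk0 : k₀ = ⌈Real.log n⌉₊) :
    (L * Real.exp 1 / k₀) ^ k₀ ≤ L * Real.exp 1 / n := by
  obtain ⟨m, rfl⟩ : ∃ m, k₀ = m + 1 := ⟨k₀ - 1, by omega⟩
  set E := Real.exp 1 with hE
  have hEpos : (0:ℝ) < E := Real.exp_pos 1
  have hkpos : (0:ℝ) < ((m:ℝ) + 1) := by positivity
  have hcast : ((m + 1 : ℕ) : ℝ) = (m:ℝ) + 1 := by push_cast; ring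
  have hnpos : (0:ℝ) < (n:ℝ) := by exact_mod_cast hn
  have hxpos : 0 < L * E / ((m:ℝ) + 1) := by positivity
  have hx : L * E / ((m:ℝ) + 1) ≤ 1 / E := by
    rw [div_le_div_iff₀ hkpos hEpos]
    calc L * E * E = L * E ^ 2 := by ring
      _ ≤ ((m + 1 : ℕ) : ℝ) := hkL
      _ = 1 * ((m:ℝ) + 1) := by rw [hcast]; ring
  -- n ≤ E^(m+1)
  have hlog : Real.log n ≤ ((m:ℝ) + 1) := by
    rw [← hcast, hk0]
    exact Nat.le_ceil _
  have hnE : (n:ℝ) ≤ E ^ (m + 1) := by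
    have h1 : (n:ℝ) = Real.exp (Real.log n) := (Real.exp_log hnpos).symm
    rw [h1, ← Real.exp_nat_mul]
    apply Real.exp_le_exp.mpr
    calc Real.log n ≤ (m:ℝ) + 1 := hlog
      _ = (m + 1 : ℕ) * 1 := by push_cast; ring
  have hE3 : E ≤ 3 := le_of_lt (lt_trans Real.exp_one_lt_d9 (by norm_num))
  have hnk : (n:ℝ) ≤ ((m:ℝ) + 1) * E ^ m := by
    calc (n:ℝ) ≤ E ^ (m + 1) := hnE
      _ = E * E ^ m := by ring
      _ ≤ 3 * E ^ m := by
          apply mul_le_mul_of_nonneg_right hE3 (by positivity)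
      _ ≤ ((m:ℝ) + 1) * E ^ m := by
          apply mul_le_mul_of_nonneg_right _ (by positivity)
          have : 3 ≤ m + 1 := hk3
          have : (3:ℝ) ≤ (m:ℝ) + 1 := by exact_mod_cast this
          linarith
  rw [hcast]
  calc (L * E / ((m:ℝ) + 1)) ^ (m + 1)
      = (L * E / ((m:ℝ) + 1)) ^ m * (L * E / ((m:ℝ) + 1)) := pow_succ _ _
    _ ≤ (1 / E) ^ m * (L * E / ((m:ℝ) + 1)) := by
        apply mul_le_mul_of_nonneg_right _ (le_of_lt hxpos)
        exact pow_le_pow_left₀ (le_of_lt hxpos) hx m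
    _ = L * E / (((m:ℝ) + 1) * E ^ m) := by
        rw [one_div, inv_pow]
        field_simp
    _ ≤ L * E / n := by
        apply div_le_div_of_nonneg_left (by positivity) hnpos hnk
end

section
/- Let X₁, …, Xₙ be d×d random matrices with E[Xⱼ] = X and ‖Xⱼ‖ ≤ L a.s., let 2 ≤ k ≤ n, and let p ∈ {0,…,k−1} be such that k divides n−p. Define D_k = (1/n)^k Σ over k-subsets {j₁<⋯<j_k} of [n] with j_k > n−p of (X_{j_k}⋯X_{j_1} − X^k). Then almost surely ‖D_k‖ ≤ 2·(L(k−1)/n)·(eL/(k−1))^{k−1}. -/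
open MeasureTheory ProbabilityTheory
open scoped Matrix.Norms.L2Operator

instance matrixMeasurableSpace {m n α : Type*} [MeasurableSpace α] :
    MeasurableSpace (Matrix m n α) :=
  inferInstanceAs (MeasurableSpace (m → n → α))


lemma count_aux (n k p : ℕ) (hk : 2 ≤ k) (hkn : k ≤ n) (hp : p ≤ k - 1) :
    ((Finset.univ.powersetCard k (α := Fin n)).filter
        (fun s => ∃ j : Fin n, j ∈ s ∧ n - p ≤ (j : ℕ))).card
      ≤ (k - 1) * (n - 1).choose (k - 1) := by
  classical
  set T : Finset (Fin n) := Finset.univ.filter (fun j => n - p ≤ (j : ℕ)) with hT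
  have hsub : (Finset.univ.powersetCard k (α := Fin n)).filter
        (fun s => ∃ j : Fin n, j ∈ s ∧ n - p ≤ (j : ℕ))
      ⊆ T.biUnion (fun j => (Finset.univ.powersetCard k (α := Fin n)).filter (fun s => j ∈ s)) := by
    intro s hs
    simp only [Finset.mem_filter] at hs
    obtain ⟨hs1, j, hj1, hj2⟩ := hs
    refine Finset.mem_biUnion.2 ⟨j, ?_, ?_⟩
    · simp only [hT, Finset.mem_filter, Finset.mem_univ, true_and]; omega
    · simp [hs1, hj1]
  have hTcard : T.card ≤ k - 1 := by
    have : T.card ≤ (Finset.range p).card := by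
      refine Finset.card_le_card_of_injOn (fun j => (j : ℕ) - (n - p)) ?_ ?_
      · intro j hj
        simp only [hT, Finset.coe_filter, Finset.mem_coe, Finset.mem_filter, Set.mem_setOf_eq, Finset.mem_univ, true_and] at hj
        have := j.isLt
        simp only [Finset.mem_coe, Finset.mem_range]
        omega
      · intro j1 hj1 j2 hj2 h
        simp only [hT, Finset.coe_filter, Set.mem_setOf_eq] at hj1 hj2
        have h' : (j1 : ℕ) - (n - p) = (j2 : ℕ) - (n - p) := h
        have h1 := j1.isLt
        have h2 := j2.isLt
        obtain ⟨-, hj1'⟩ := hj1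
        obtain ⟨-, hj2'⟩ := hj2
        exact Fin.ext (by omega)
    simp only [Finset.card_range] at this
    omega
  have hone : ∀ j : Fin n,
      ((Finset.univ.powersetCard k (α := Fin n)).filter (fun s => j ∈ s)).card
        ≤ (n - 1).choose (k - 1) := by
    intro j
    have : ((Finset.univ.powersetCard k (α := Fin n)).filter (fun s => j ∈ s)).card
        ≤ ((Finset.univ.erase j).powersetCard (k - 1)).card := by
      refine Finset.card_le_card_of_injOn (fun s => s.erase j) ?_ ?_
      · intro s hs
        simp only [Finset.mem_coe, Finset.mem_filter, Finset.mem_powersetCard] at hs ⊢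
        obtain ⟨⟨hsub', hcard⟩, hmem⟩ := hs
        refine ⟨?_, ?_⟩
        · intro x hx
          simp only [Finset.mem_erase] at hx ⊢
          exact ⟨hx.1, Finset.mem_univ _⟩
        · rw [Finset.card_erase_of_mem hmem, hcard]
      · intro s1 hs1 s2 hs2 h
        simp only [Finset.coe_filter, Set.mem_setOf_eq] at hs1 hs2
        have h : s1.erase j = s2.erase j := h
        have e1 : insert j (s1.erase j) = s1 := Finset.insert_erase hs1.2
        have e2 : insert j (s2.erase j) = s2 := Finset.insert_erase hs2.2
        rw [← e1, ← e2, h]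
    rw [Finset.card_powersetCard, Finset.card_erase_of_mem (Finset.mem_univ j),
      Finset.card_univ, Fintype.card_fin] at this
    exact this
  calc _ ≤ _ := Finset.card_le_card hsub
    _ ≤ ∑ j ∈ T, ((Finset.univ.powersetCard k (α := Fin n)).filter (fun s => j ∈ s)).card :=
        Finset.card_biUnion_le
    _ ≤ ∑ _j ∈ T, (n - 1).choose (k - 1) := Finset.sum_le_sum fun j _ => hone j
    _ = T.card * (n - 1).choose (k - 1) := by rw [Finset.sum_const, smul_eq_mul]
    _ ≤ (k - 1) * (n - 1).choose (k - 1) := Nat.mul_le_mul_right _ hTcard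
lemma normA_aux {d : ℕ} {Ω : Type*} [MeasureSpace Ω] [IsProbabilityMeasure (ℙ : Measure Ω)]
    (Y : Ω → Matrix (Fin d) (Fin d) ℝ) (hmeas : Measurable Y)
    (hint : ∀ i i', Integrable (fun ω => Y ω i i') ℙ)
    (L : ℝ) (hbd : ∀ᵐ ω ∂(ℙ : Measure Ω), ‖Y ω‖ ≤ L)
    (A : Matrix (Fin d) (Fin d) ℝ)
    (hmean : (Matrix.of fun i i' => ∫ ω, Y ω i i' ∂ℙ) = A) : ‖A‖ ≤ L := by
  classical
  have hrw : ∀ ω, Y ω = ∑ i : Fin d, ∑ i' : Fin d,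
      (Y ω i i') • Matrix.single i i' (1 : ℝ) := by
    intro ω
    conv_lhs => rw [Matrix.matrix_eq_sum_single (Y ω)]
    refine Finset.sum_congr rfl fun i _ => Finset.sum_congr rfl fun i' _ => ?_
    rw [Matrix.smul_single, smul_eq_mul, mul_one]
  have hentry : ∀ i i', Measurable (fun ω => Y ω i i') := fun i i' =>
    ((measurable_pi_apply i').comp ((measurable_pi_apply i).comp hmeas))
  have hsm : StronglyMeasurable Y := by
    have : StronglyMeasurable (fun ω => ∑ i : Fin d, ∑ i' : Fin d,
        (Y ω i i') • Matrix.single i i' (1 : ℝ)) := by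
      apply Finset.stronglyMeasurable_fun_sum
      intro i _
      apply Finset.stronglyMeasurable_fun_sum
      intro i' _
      exact ((hentry i i').stronglyMeasurable).smul_const _
    exact (funext hrw : Y = _) ▸ this
  have hintY : Integrable Y ℙ := by
    refine ⟨hsm.aestronglyMeasurable, ?_⟩
    exact (hasFiniteIntegral_const L).mono' hbd
  have hAeq : (∫ ω, Y ω ∂ℙ) = A := by
    rw [← hmean]
    have h1 : (∫ ω, Y ω ∂ℙ) = ∑ i : Fin d, ∑ i' : Fin d,
        (∫ ω, Y ω i i' ∂ℙ) • Matrix.single i i' (1 : ℝ) := by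
      rw [integral_congr_ae (Filter.Eventually.of_forall hrw)]
      rw [integral_finset_sum]
      · refine Finset.sum_congr rfl fun i _ => ?_
        rw [integral_finset_sum]
        · exact Finset.sum_congr rfl fun i' _ => integral_smul_const _ _
        · intro i' _
          exact (hint i i').smul_const _
      · intro i _
        apply integrable_finset_sum
        intro i' _
        exact (hint i i').smul_const _
    rw [h1]
    ext a b
    simp only [Matrix.sum_apply, Matrix.smul_apply, Matrix.single, Matrix.of_apply,
      smul_eq_mul]
    rw [Finset.sum_eq_single a]
    · rw [Finset.sum_eq_single b]
      · simp
      · intro b' _ hb'; simp [hb']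
      · simp
    · intro a' _ ha'
      apply Finset.sum_eq_zero
      intro b' _
      simp [ha']
    · simp
  calc ‖A‖ = ‖∫ ω, Y ω ∂ℙ‖ := by rw [hAeq]
    _ ≤ ∫ ω, ‖Y ω‖ ∂ℙ := norm_integral_le_integral_norm _
    _ ≤ ∫ _ω, L ∂ℙ := integral_mono_ae hintY.norm (integrable_const L) hbd
    _ = L := by simp

lemma num_aux (n k c : ℕ) (hk : 2 ≤ k) (hkn : k ≤ n)
    (hc : c ≤ (k - 1) * (n - 1).choose (k - 1)) (L : ℝ) (hL : 0 < L) :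
    ((n:ℝ)⁻¹) ^ k * ((c : ℝ) * (2 * L ^ k)) ≤
      2 * (L * ((k:ℝ) - 1) / n) * (Real.exp 1 * L / ((k:ℝ) - 1)) ^ (k - 1) := by
  set m := k - 1 with hm
  have hk1 : k = m + 1 := by omega
  have hm1 : 1 ≤ m := by omega
  have hcast : ((k:ℝ) - 1) = (m : ℝ) := by rw [hk1]; push_cast; ring
  have hn0 : (0:ℝ) < n := by
    have h0 : 0 < n := by omega
    exact_mod_cast h0
  have hm0 : (0:ℝ) < m := by exact_mod_cast hm1
  have hfac : (0:ℝ) < (m.factorial : ℝ) := by exact_mod_cast m.factorial_pos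
  have h3 : (m:ℝ)^m ≤ Real.exp 1 ^ m * m.factorial := by
    have := Real.pow_div_factorial_le_exp (x := (m:ℝ)) (by positivity) m
    rw [div_le_iff₀ hfac] at this
    calc (m:ℝ)^m ≤ Real.exp (m:ℝ) * m.factorial := this
      _ = Real.exp 1 ^ m * m.factorial := by
          rw [← Real.exp_nat_mul]; norm_num
  have hchoose : (((n-1).choose m : ℕ) : ℝ) ≤ (n:ℝ)^m * Real.exp 1 ^ m / (m:ℝ)^m := by
    have h1 : (((n-1).choose m : ℕ) : ℝ) ≤ ((n-1 : ℕ):ℝ)^m / m.factorial :=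
      Nat.choose_le_pow_div m (n-1)
    have h2 : ((n-1 : ℕ):ℝ)^m ≤ (n:ℝ)^m := by
      gcongr
      exact_mod_cast Nat.sub_le n 1
    calc (((n-1).choose m : ℕ) : ℝ) ≤ (n:ℝ)^m / m.factorial :=
          h1.trans (by gcongr ?_ ^ m / _; exact_mod_cast Nat.sub_le n 1)
      _ ≤ (n:ℝ)^m * Real.exp 1 ^ m / (m:ℝ)^m := by
          rw [div_le_div_iff₀ hfac (by positivity)]
          calc (n:ℝ)^m * (m:ℝ)^m ≤ (n:ℝ)^m * (Real.exp 1 ^ m * m.factorial) := by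
                gcongr
            _ = (n:ℝ)^m * Real.exp 1 ^ m * m.factorial := by ring
  have hcR : (c : ℝ) ≤ (m : ℝ) * ((n-1).choose m : ℕ) := by
    exact_mod_cast hc
  calc ((n:ℝ)⁻¹) ^ k * ((c : ℝ) * (2 * L ^ k))
      ≤ ((n:ℝ)⁻¹) ^ k * (((m : ℝ) * ((n:ℝ)^m * Real.exp 1 ^ m / (m:ℝ)^m)) * (2 * L ^ k)) := by
        gcongr
        exact hcR.trans (by gcongr)
    _ = 2 * (L * ((k:ℝ) - 1) / n) * (Real.exp 1 * L / ((k:ℝ) - 1)) ^ (k - 1) := by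
        rw [hcast, hk1]
        rw [Nat.add_sub_cancel]
        rw [div_pow, mul_pow]
        rw [inv_pow]
        field_simp
        ring

lemma list_prod_le_pow (L : ℝ) : ∀ (l : List ℝ), (∀ x ∈ l, 0 ≤ x) → (∀ x ∈ l, x ≤ L) →
    l.prod ≤ L ^ l.length := by
  intro l
  induction l with
  | nil => simp
  | cons a t ih =>
    intro h0 h1
    simp only [List.prod_cons, List.length_cons, pow_succ]
    have ht : t.prod ≤ L ^ t.length :=
      ih (fun x hx => h0 x (List.mem_cons_of_mem _ hx))
        (fun x hx => h1 x (List.mem_cons_of_mem _ hx))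
    have htn : (0:ℝ) ≤ t.prod := List.prod_nonneg (fun x hx => h0 x (List.mem_cons_of_mem _ hx))
    have ha0 : 0 ≤ a := h0 a List.mem_cons_self
    have haL : a ≤ L := h1 a List.mem_cons_self
    calc a * t.prod ≤ L * L ^ t.length := mul_le_mul haL ht htn (ha0.trans haL)
      _ = L ^ t.length * L := mul_comm _ _

theorem stmt13 (d n k p : ℕ) (hk : 2 ≤ k) (hkn : k ≤ n) (hp : p ≤ k - 1)
    (hdvd : k ∣ (n - p)) (L : ℝ) (hL : 0 < L)
    {Ω : Type*} [MeasureSpace Ω] [IsProbabilityMeasure (ℙ : Measure Ω)]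
    (X : Fin n → Ω → Matrix (Fin d) (Fin d) ℝ)
    (hmeas : ∀ j, Measurable (X j))
    (hint : ∀ j i i', Integrable (fun ω => X j ω i i') ℙ)
    (hbd : ∀ j, ∀ᵐ ω ∂(ℙ : Measure Ω), ‖X j ω‖ ≤ L)
    (A : Matrix (Fin d) (Fin d) ℝ)
    (hmean : ∀ j, (Matrix.of fun i i' => ∫ ω, X j ω i i' ∂ℙ) = A)
    (D : Ω → Matrix (Fin d) (Fin d) ℝ)
    (hD : ∀ ω, D ω = ((n : ℝ)⁻¹) ^ k •
      ∑ s ∈ (Finset.univ.powersetCard k (α := Fin n)).filter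
          (fun s => ∃ j : Fin n, j ∈ s ∧ n - p ≤ (j : ℕ)),
        ((((s.sort (· ≤ ·)).reverse.map (fun j => X j ω)).prod) - A ^ k)) :
    ∀ᵐ ω ∂(ℙ : Measure Ω),
      ‖D ω‖ ≤ 2 * (L * (k - 1) / n) * (Real.exp 1 * L / (k - 1)) ^ (k - 1) := by
  classical
  have hn : 0 < n := by omega
  have hA : ‖A‖ ≤ L := by
    refine normA_aux (X ⟨0, hn⟩) (hmeas _) (hint _) L (hbd _) A (hmean _)
  set P := (Finset.univ.powersetCard k (α := Fin n)).filter
      (fun s => ∃ j : Fin n, j ∈ s ∧ n - p ≤ (j : ℕ)) with hP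
  have hcard : P.card ≤ (k - 1) * (n - 1).choose (k - 1) := count_aux n k p hk hkn hp
  filter_upwards [ae_all_iff.2 hbd] with ω hω
  rw [hD ω]
  have hterm : ∀ s ∈ P, ‖(((s.sort (· ≤ ·)).reverse.map (fun j => X j ω)).prod) - A ^ k‖
      ≤ 2 * L ^ k := by
    intro s hs
    have hscard : s.card = k := by
      rw [hP] at hs
      exact (Finset.mem_powersetCard.1 (Finset.mem_filter.1 hs).1).2
    set l := (s.sort (· ≤ ·)).reverse.map (fun j => X j ω) with hl
    have hlen : l.length = k := by
      rw [hl, List.length_map, List.length_reverse, Finset.length_sort, hscard]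
    have hlne : l ≠ [] := by
      intro h
      rw [h] at hlen
      simp at hlen
      omega
    have h1 : ‖l.prod‖ ≤ L ^ k := by
      calc ‖l.prod‖ ≤ (l.map norm).prod := List.norm_prod_le' hlne
        _ ≤ L ^ (l.map norm).length := by
            apply list_prod_le_pow
            · intro x hx
              obtain ⟨M, hM, rfl⟩ := List.mem_map.1 hx
              exact norm_nonneg _
            · intro x hx
              obtain ⟨M, hM, rfl⟩ := List.mem_map.1 hx
              obtain ⟨j, -, rfl⟩ := List.mem_map.1 hM
              exact hω j
        _ = L ^ k := by rw [List.length_map, hlen]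
    have h2 : ‖A ^ k‖ ≤ L ^ k := by
      calc ‖A ^ k‖ ≤ ‖A‖ ^ k := norm_pow_le' A (by omega)
        _ ≤ L ^ k := pow_le_pow_left₀ (norm_nonneg _) hA k
    calc ‖l.prod - A ^ k‖ ≤ ‖l.prod‖ + ‖A ^ k‖ := norm_sub_le _ _
      _ ≤ L ^ k + L ^ k := add_le_add h1 h2
      _ = 2 * L ^ k := by ring
  have hsum : ‖∑ s ∈ P, ((((s.sort (· ≤ ·)).reverse.map (fun j => X j ω)).prod) - A ^ k)‖
      ≤ (P.card : ℝ) * (2 * L ^ k) := by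
    calc _ ≤ ∑ s ∈ P, ‖(((s.sort (· ≤ ·)).reverse.map (fun j => X j ω)).prod) - A ^ k‖ :=
          norm_sum_le _ _
      _ ≤ ∑ _s ∈ P, 2 * L ^ k := Finset.sum_le_sum hterm
      _ = (P.card : ℝ) * (2 * L ^ k) := by rw [Finset.sum_const, nsmul_eq_mul]
  calc ‖((n : ℝ)⁻¹) ^ k • ∑ s ∈ P,
        ((((s.sort (· ≤ ·)).reverse.map (fun j => X j ω)).prod) - A ^ k)‖
      = ((n : ℝ)⁻¹) ^ k *
        ‖∑ s ∈ P, ((((s.sort (· ≤ ·)).reverse.map (fun j => X j ω)).prod) - A ^ k)‖ := by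
        rw [norm_smul, Real.norm_eq_abs, abs_of_nonneg (by positivity)]
    _ ≤ ((n : ℝ)⁻¹) ^ k * ((P.card : ℝ) * (2 * L ^ k)) := by gcongr
    _ ≤ 2 * (L * ((k:ℝ) - 1) / n) * (Real.exp 1 * L / ((k:ℝ) - 1)) ^ (k - 1) :=
        num_aux n k P.card hk hkn hcard L hL
end

section
/- Let n, k be positive integers with k dividing n. Then the family of all k-element subsets of {1,…,n} can be partitioned into m = C(n,k)/(n/k) = C(n−1,k−1) groups P₁, …, P_m, each of which is a partition of {1,…,n} into n/k disjoint k-sets. -/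
open Finset

namespace Baranyai

variable (n k : ℕ)

/-- the first `ℓ` elements of `Fin n` -/
def blw (ℓ : ℕ) : Finset (Fin n) := Finset.univ.filter (fun x => x.val < ℓ)

lemma card_blw (ℓ : ℕ) (h : ℓ ≤ n) : (blw n ℓ).card = ℓ := by
  classical
  rw [blw]
  rw [Finset.card_filter]
  rw [Fin.sum_univ_eq_sum_range (fun i => if i < ℓ then 1 else 0)]
  have : ∀ i ∈ Finset.range n, (if i < ℓ then 1 else 0) = if i ∈ Finset.range ℓ then 1 else 0 := by
    intro i _; simp
  rw [Finset.sum_congr rfl this, Finset.sum_ite_mem, Finset.inter_comm,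
    Finset.sum_const, smul_eq_mul, mul_one]
  rw [show Finset.range ℓ ∩ Finset.range n = Finset.range ℓ from
    Finset.inter_eq_left.mpr (Finset.range_subset_range.mpr h), Finset.card_range]

lemma blw_n : blw n n = Finset.univ := by
  simp [blw, Finset.filter_true_of_mem, Fin.is_lt]

lemma blw_succ (ℓ : ℕ) (h : ℓ < n) :
    blw n (ℓ + 1) = insert ⟨ℓ, h⟩ (blw n ℓ) := by
  ext x
  simp only [blw, mem_filter, mem_univ, true_and, mem_insert]
  constructor
  · intro hx
    rcases Nat.lt_succ_iff_lt_or_eq.mp hx with h' | h'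
    · exact Or.inr h'
    · exact Or.inl (by ext; simp [h'])
  · rintro (rfl | hx)
    · exact Nat.lt_succ_self ℓ
    · exact hx.trans (Nat.lt_succ_self ℓ)

lemma not_mem_blw (ℓ : ℕ) (h : ℓ < n) : (⟨ℓ, h⟩ : Fin n) ∉ blw n ℓ := by
  simp [blw]

structure Good (ℓ : ℕ) (F : Fin ((n-1).choose (k-1)) → Finset (Finset (Fin n))) : Prop where
  nonmem : ∀ i, ∅ ∉ F i
  card_le : ∀ i, ∀ S ∈ F i, S.card ≤ k
  subset : ∀ i, ∀ S ∈ F i, S ⊆ blw n ℓ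
  disj : ∀ i, ((F i : Set (Finset (Fin n)))).PairwiseDisjoint id
  union : ∀ i, (F i).biUnion id = blw n ℓ
  parts_le : ∀ i, (F i).card ≤ n / k
  count : ∀ S : Finset (Fin n), S.Nonempty → S.card ≤ k → S ⊆ blw n ℓ →
    (Finset.univ.filter (fun i => S ∈ F i)).card = (n - ℓ).choose (k - S.card)
  total : (∑ i, (F i).card) = n.choose k - (n - ℓ).choose k

lemma good_zero (hk : 0 < k) : Good n k 0 (fun _ => (∅ : Finset (Finset (Fin n)))) := by
  have hb : blw n 0 = ∅ := by simp [blw]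
  constructor <;> simp_all
  intro S hS _ hS'
  exact absurd hS' (Finset.nonempty_iff_ne_empty.mp hS)

lemma mul_choose_aux {q j : ℕ} (hq : 0 < q) (hj : 0 < j) :
    j * q.choose j = q * (q-1).choose (j-1) := by
  have h := Nat.add_one_mul_choose_eq (q-1) (j-1)
  rw [show q-1+1 = q by omega, show j-1+1 = j by omega] at h
  rw [h, mul_comm]

lemma nk_choose (hk : 0 < k) (hn : 0 < n) (hdvd : k ∣ n) :
    (n / k) * (n-1).choose (k-1) = n.choose k := by
  have h := mul_choose_aux (q := n) (j := k) hn hk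
  have h2 : k * ((n / k) * (n-1).choose (k-1)) = k * n.choose k := by
    rw [← mul_assoc, Nat.mul_div_cancel' hdvd, h]
  exact Nat.eq_of_mul_eq_mul_left hk h2

lemma sum_d_elig (hk : 0 < k) {ℓ : ℕ} (hℓ : ℓ < n) :
    ∑ S ∈ ((blw n ℓ).powerset.filter (fun S => S.card < k)),
      (n - ℓ - 1).choose (k - S.card - 1) = (n-1).choose (k-1) := by
  classical
  set q := n - ℓ with hq
  set G : ℕ → ℕ := fun j => if j < k then ℓ.choose j * (q-1).choose (k-1-j) else 0 with hG
  have left : ∑ S ∈ ((blw n ℓ).powerset.filter (fun S => S.card < k)),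
      (q - 1).choose (k - S.card - 1) = ∑ j ∈ Finset.range (ℓ+1+k), G j := by
    rw [Finset.sum_filter]
    have hps :=
      Finset.sum_powerset_apply_card (x := blw n ℓ) (fun j => if j < k then (q - 1).choose (k - j - 1) else 0)
    rw [hps, card_blw n ℓ (le_of_lt hℓ)]
    have inner : ∀ j, ℓ.choose j • (if j < k then (q - 1).choose (k - j - 1) else 0) = G j := by
      intro j
      rw [smul_eq_mul, hG, show k - j - 1 = k - 1 - j by omega]
      simp only [mul_ite, mul_zero]
    rw [Finset.sum_congr rfl (fun j _ => inner j)]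
    apply Finset.sum_subset (Finset.range_subset_range.mpr (by omega))
    intro j _ hj
    have : ℓ < j := by simp at hj ⊢; omega
    simp [hG, Nat.choose_eq_zero_of_lt this]
  have right : (n-1).choose (k-1) = ∑ j ∈ Finset.range (ℓ+1+k), G j := by
    have hn1 : n - 1 = ℓ + (q - 1) := by omega
    rw [hn1, Nat.add_choose_eq, Finset.Nat.sum_antidiagonal_eq_sum_range_succ_mk]
    have hks : (k-1).succ = k := by omega
    rw [hks]
    have eq1 : ∀ j ∈ Finset.range k, ℓ.choose j * (q-1).choose (k-1-j) = G j := by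
      intro j hj
      rw [hG]
      simp only
      rw [if_pos (Finset.mem_range.mp hj)]
    rw [Finset.sum_congr rfl eq1]
    apply Finset.sum_subset (Finset.range_subset_range.mpr (by omega))
    intro j _ hj
    have : ¬ (j < k) := by simp at hj; omega
    simp [hG, this]
  rw [left, right]


lemma good_step (hk : 0 < k) (hn : 0 < n) (hdvd : k ∣ n) {ℓ : ℕ} (hℓ : ℓ < n)
    {F : Fin ((n-1).choose (k-1)) → Finset (Finset (Fin n))} (hF : Good n k ℓ F) :
    ∃ F', Good n k (ℓ+1) F' := by
  classical
  set q := n - ℓ with hqdef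
  have hq : 0 < q := by omega
  set x : Fin n := ⟨ℓ, hℓ⟩ with hx
  have hxblw : x ∉ blw n ℓ := not_mem_blw n ℓ hℓ
  set d : Finset (Fin n) → ℕ := fun S => (q - 1).choose (k - S.card - 1) with hd
  set Elig : Finset (Finset (Fin n)) :=
    ((blw n ℓ).powerset.filter (fun S => S.card < k)) with hElig
  have mem_Elig : ∀ S, S ∈ Elig ↔ S ⊆ blw n ℓ ∧ S.card < k := by
    intro S; simp [hElig]
  have empty_Elig : (∅ : Finset (Fin n)) ∈ Elig := by
    rw [mem_Elig]; simp [hk]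
  have sum_d : ∑ S ∈ Elig, d S = (n-1).choose (k-1) := sum_d_elig n k hk hℓ
  set opt : Fin ((n-1).choose (k-1)) → Finset (Finset (Fin n)) :=
    fun i => Elig.filter (fun S => S ∈ F i ∨ (S = ∅ ∧ (F i).card < n / k)) with hopt
  have mem_opt : ∀ i S, S ∈ opt i ↔
      S ∈ Elig ∧ (S ∈ F i ∨ (S = ∅ ∧ (F i).card < n / k)) := by
    intro i S; simp [hopt]
  have mem_opt_of_F : ∀ i S, S ∈ F i → S.card < k → S ∈ opt i := by
    intro i S hS hcard
    rw [mem_opt, mem_Elig]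
    exact ⟨⟨hF.subset i S hS, hcard⟩, Or.inl hS⟩
  set t : Fin ((n-1).choose (k-1)) → Finset (Finset (Fin n) × ℕ) :=
    fun i => (opt i).biUnion (fun S => {S} ×ˢ Finset.range (d S)) with ht
  have card_cop : ∀ E : Finset (Finset (Fin n)),
      (E.biUnion (fun S => {S} ×ˢ Finset.range (d S))).card = ∑ S ∈ E, d S := by
    intro E
    rw [Finset.card_biUnion]
    · exact Finset.sum_congr rfl (fun S _ => by simp)
    · intro a _ b _ hab
      simp only [Finset.disjoint_left, Finset.mem_product, Finset.mem_singleton]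
      rintro ⟨p1, p2⟩ ⟨rfl, -⟩ ⟨h, -⟩
      exact hab h
  -- the per-i weight identity
  have sum_sizes : ∀ i, ∑ P ∈ F i, P.card = ℓ := by
    intro i
    have hcb : ((F i).biUnion id).card = ∑ P ∈ F i, (id P).card := by
      apply Finset.card_biUnion
      intro a ha b hb hab
      exact hF.disj i (by exact_mod_cast ha) (by exact_mod_cast hb) hab
    rw [hF.union i, card_blw n ℓ (le_of_lt hℓ)] at hcb
    exact hcb.symm
  have weight : ∀ i, k * (n / k - (F i).card) + (∑ P ∈ F i, (k - P.card)) = q := by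
    intro i
    have e1 : k * (n / k - (F i).card) + k * (F i).card = n := by
      rw [← Nat.mul_add, Nat.sub_add_cancel (hF.parts_le i), Nat.mul_div_cancel' hdvd]
    have e2 : (∑ P ∈ F i, (k - P.card)) + ℓ = k * (F i).card := by
      have : ∑ P ∈ F i, ((k - P.card) + P.card) = ∑ P ∈ F i, k := by
        apply Finset.sum_congr rfl
        intro P hP
        have := hF.card_le i P hP
        omega
      rw [Finset.sum_add_distrib, sum_sizes i, Finset.sum_const, smul_eq_mul,
        mul_comm] at this
      exact this
    omega
  have total_empty : (∑ i : Fin ((n-1).choose (k-1)), (n / k - (F i).card)) = q.choose k := by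
    have h1 : (∑ i : Fin ((n-1).choose (k-1)), (n / k - (F i).card)) + (∑ i : Fin ((n-1).choose (k-1)), (F i).card)
        = (n-1).choose (k-1) * (n / k) := by
      rw [← Finset.sum_add_distrib]
      rw [Finset.sum_congr rfl (fun i _ => Nat.sub_add_cancel (hF.parts_le i))]
      rw [Finset.sum_const, Finset.card_univ, Fintype.card_fin, smul_eq_mul]
    rw [hF.total] at h1
    rw [← hqdef] at h1
    have h2 : (n-1).choose (k-1) * (n / k) = n.choose k := by
      rw [mul_comm]; exact nk_choose n k hk hn hdvd
    have h3 : q.choose k ≤ n.choose k := Nat.choose_le_choose k (by omega)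
    omega
  -- Hall's condition
  have hall : ∀ T : Finset (Fin ((n-1).choose (k-1))), T.card ≤ (T.biUnion t).card := by
    intro T
    have hTb : T.biUnion t = (T.biUnion opt).biUnion (fun S => {S} ×ˢ Finset.range (d S)) :=
      (Finset.biUnion_biUnion T opt _).symm
    rw [hTb, card_cop]
    set OT := T.biUnion opt with hOT
    have hbound1 : (∑ i ∈ T, k * (n / k - (F i).card))
        ≤ (if ∅ ∈ OT then q * d ∅ else 0) := by
      by_cases h0 : ∅ ∈ OT
      · rw [if_pos h0]
        have h1 : ∑ i ∈ T, k * (n / k - (F i).card)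
            ≤ ∑ i : Fin ((n-1).choose (k-1)), k * (n / k - (F i).card) :=
          Finset.sum_le_sum_of_subset (Finset.subset_univ T)
        have h2 : ∑ i : Fin ((n-1).choose (k-1)), k * (n / k - (F i).card)
            = k * q.choose k := by
          rw [← Finset.mul_sum, total_empty]
        have h3 : k * q.choose k = q * (q-1).choose (k-1) := mul_choose_aux hq hk
        have h4 : d ∅ = (q-1).choose (k-1) := by rw [hd]; simp
        rw [h4]
        omega
      · rw [if_neg h0]
        apply le_of_eq
        apply Finset.sum_eq_zero
        intro i hi
        have hfull : ¬ ((F i).card < n / k) := by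
          intro hlt
          exact h0 (Finset.mem_biUnion.mpr
            ⟨i, hi, (mem_opt i ∅).mpr ⟨empty_Elig, Or.inr ⟨rfl, hlt⟩⟩⟩)
        have := hF.parts_le i
        have hz : n / k - (F i).card = 0 := by omega
        rw [hz, mul_zero]
    have hbound2 : (∑ i ∈ T, ∑ P ∈ F i, (k - P.card)) ≤ ∑ S ∈ OT.erase ∅, q * d S := by
      have step1 : ∀ i ∈ T, (∑ P ∈ F i, (k - P.card))
          = ∑ S ∈ OT.erase ∅, (if S ∈ F i then k - S.card else 0) := by
        intro i hi
        have hint : (OT.erase ∅) ∩ F i = (F i).filter (fun P => P.card < k) := by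
          ext P
          simp only [Finset.mem_inter, Finset.mem_erase, Finset.mem_filter]
          constructor
          · rintro ⟨⟨hne, hPOT⟩, hPF⟩
            refine ⟨hPF, ?_⟩
            obtain ⟨j, hj, hPopt⟩ := Finset.mem_biUnion.mp hPOT
            exact ((mem_Elig P).mp ((mem_opt j P).mp hPopt).1).2
          · rintro ⟨hPF, hPk⟩
            refine ⟨⟨fun h => hF.nonmem i (h ▸ hPF), ?_⟩, hPF⟩
            exact Finset.mem_biUnion.mpr ⟨i, hi, mem_opt_of_F i P hPF hPk⟩
        rw [Finset.sum_ite_mem, hint, Finset.sum_filter]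
        apply Finset.sum_congr rfl
        intro P hP
        have := hF.card_le i P hP
        by_cases h : P.card < k
        · rw [if_pos h]
        · rw [if_neg h]; omega
      rw [Finset.sum_congr rfl step1, Finset.sum_comm]
      apply Finset.sum_le_sum
      intro S hS
      have hSne : S ≠ ∅ := (Finset.mem_erase.mp hS).1
      have hSOT : S ∈ OT := (Finset.mem_erase.mp hS).2
      obtain ⟨j, hj, hSopt⟩ := Finset.mem_biUnion.mp hSOT
      have hSElig := ((mem_opt j S).mp hSopt).1
      have hSsub := ((mem_Elig S).mp hSElig).1
      have hSk := ((mem_Elig S).mp hSElig).2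
      have hsum : (∑ i ∈ T, (if S ∈ F i then k - S.card else 0))
          = (T.filter (fun i => S ∈ F i)).card * (k - S.card) := by
        rw [Finset.sum_ite, Finset.sum_const_zero, add_zero, Finset.sum_const, smul_eq_mul]
      rw [hsum]
      have hle1 : (T.filter (fun i => S ∈ F i)).card
          ≤ (Finset.univ.filter (fun i => S ∈ F i)).card :=
        Finset.card_le_card (Finset.filter_subset_filter _ (Finset.subset_univ T))
      have hcnt : (Finset.univ.filter (fun i => S ∈ F i)).card = q.choose (k - S.card) := by
        rw [hF.count S (Finset.nonempty_iff_ne_empty.mpr hSne) (le_of_lt hSk) hSsub, ← hqdef]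
      have hid : (k - S.card) * q.choose (k - S.card) = q * d S := by
        rw [hd]
        exact mul_choose_aux hq (by omega : 0 < k - S.card)
      calc (T.filter (fun i => S ∈ F i)).card * (k - S.card)
          ≤ q.choose (k - S.card) * (k - S.card) :=
            Nat.mul_le_mul_right _ (hcnt ▸ hle1)
        _ = q * d S := by rw [mul_comm]; exact hid
    have hmul : q * T.card ≤ q * ∑ S ∈ OT, d S := by
      calc q * T.card = ∑ i ∈ T, q := by rw [Finset.sum_const, smul_eq_mul, mul_comm]
        _ = ∑ i ∈ T, (k * (n / k - (F i).card) + (∑ P ∈ F i, (k - P.card))) :=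
          Finset.sum_congr rfl (fun i _ => (weight i).symm)
        _ = (∑ i ∈ T, k * (n / k - (F i).card)) + ∑ i ∈ T, ∑ P ∈ F i, (k - P.card) :=
          Finset.sum_add_distrib
        _ ≤ (if ∅ ∈ OT then q * d ∅ else 0) + ∑ S ∈ OT.erase ∅, q * d S :=
          Nat.add_le_add hbound1 hbound2
        _ ≤ ∑ S ∈ OT, q * d S := by
          by_cases h0 : ∅ ∈ OT
          · rw [if_pos h0, ← Finset.add_sum_erase OT (fun S => q * d S) h0]
          · rw [if_neg h0, zero_add]
            exact Finset.sum_le_sum_of_subset (Finset.erase_subset _ _)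
        _ = q * ∑ S ∈ OT, d S := (Finset.mul_sum _ _ _).symm
    exact Nat.le_of_mul_le_mul_left hmul hq
  obtain ⟨f, hfinj, hft⟩ := (Finset.all_card_le_biUnion_card_iff_exists_injective t).mp hall
  set g : Fin ((n-1).choose (k-1)) → Finset (Fin n) := fun i => (f i).1 with hg
  have hg_opt : ∀ i, g i ∈ opt i ∧ (f i).2 < d (g i) := by
    intro i
    have h := hft i
    rw [ht] at h
    simp only [Finset.mem_biUnion, Finset.mem_product, Finset.mem_singleton,
      Finset.mem_range] at h
    obtain ⟨S, hS, h1, h2⟩ := h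
    have hgs : g i = S := h1
    rw [hgs]
    exact ⟨hS, h2⟩
  have hg_elig : ∀ i, g i ∈ Elig := fun i => ((mem_opt i (g i)).mp (hg_opt i).1).1
  have hg_sub : ∀ i, g i ⊆ blw n ℓ := fun i => ((mem_Elig (g i)).mp (hg_elig i)).1
  have hg_card : ∀ i, (g i).card < k := fun i => ((mem_Elig (g i)).mp (hg_elig i)).2
  have hg_cases : ∀ i, g i ∈ F i ∨ (g i = ∅ ∧ (F i).card < n / k) :=
    fun i => ((mem_opt i (g i)).mp (hg_opt i).1).2
  have hg_x : ∀ i, x ∉ g i := fun i hx' => hxblw (hg_sub i hx')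
  -- fiber counts
  have hg_cnt : ∀ S ∈ Elig, (Finset.univ.filter (fun i => g i = S)).card = d S := by
    have hle : ∀ S ∈ Elig, (Finset.univ.filter (fun i => g i = S)).card ≤ d S := by
      intro S _
      rw [← Finset.card_range (d S)]
      apply Finset.card_le_card_of_injOn (fun i => (f i).2)
      · intro i hi
        simp only [Finset.mem_coe, Finset.mem_filter] at hi
        have := (hg_opt i).2
        rw [hi.2] at this
        exact Finset.mem_range.mpr this
      · intro i hi j hj hij
        simp only [Finset.coe_filter, Set.mem_setOf_eq] at hi hj
        apply hfinj
        apply Prod.ext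
        · exact hi.2.trans hj.2.symm
        · exact hij
    have hpart : ∑ S ∈ Elig, (Finset.univ.filter (fun i => g i = S)).card = (n-1).choose (k-1) := by
      rw [← Finset.card_eq_sum_card_fiberwise (fun i _ => hg_elig i)]
      rw [Finset.card_univ, Fintype.card_fin]
    exact fun S hS =>
      (Finset.sum_eq_sum_iff_of_le hle).mp (hpart.trans sum_d.symm) S hS
  -- the new family
  set F' : Fin ((n-1).choose (k-1)) → Finset (Finset (Fin n)) :=
    fun i => insert (insert x (g i)) ((F i).erase (g i)) with hF'
  have hnewx : ∀ i, x ∈ insert x (g i) := fun i => Finset.mem_insert_self x (g i)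
  have hnew_not_old : ∀ i, ∀ P ∈ F i, insert x (g i) ≠ P := by
    intro i P hP h
    exact hxblw (hF.subset i P hP (h ▸ hnewx i))
  have herase_sub : ∀ i, (F i).erase (g i) ⊆ F i := fun i => Finset.erase_subset _ _
  refine ⟨F', ?_⟩
  constructor
  · -- nonmem
    intro i h
    rcases Finset.mem_insert.mp h with h | h
    · exact (Finset.insert_ne_empty x (g i)) h.symm
    · exact hF.nonmem i (herase_sub i h)
  · -- card_le
    intro i S hS
    rcases Finset.mem_insert.mp hS with rfl | h
    · rw [Finset.card_insert_of_notMem (hg_x i)]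
      have := hg_card i
      omega
    · exact hF.card_le i S (herase_sub i h)
  · -- subset
    intro i S hS
    rw [blw_succ n ℓ hℓ]
    rcases Finset.mem_insert.mp hS with rfl | h
    · exact Finset.insert_subset_insert x (hg_sub i)
    · exact (hF.subset i S (herase_sub i h)).trans (Finset.subset_insert _ _)
  · -- disj
    intro i
    rw [hF']
    simp only [Finset.coe_insert]
    rw [Set.pairwiseDisjoint_insert]
    constructor
    · exact (hF.disj i).subset (by exact_mod_cast Finset.coe_subset.mpr (herase_sub i))
    · intro P hP _
      have hPF : P ∈ F i := herase_sub i (by exact_mod_cast hP)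
      have hPne : P ≠ g i := (Finset.mem_erase.mp (by exact_mod_cast hP)).1
      simp only [id]
      rw [Finset.disjoint_insert_left]
      constructor
      · exact fun hxP => hxblw (hF.subset i P hPF hxP)
      · rcases hg_cases i with hgi | ⟨hgi, -⟩
        · exact hF.disj i (by exact_mod_cast Finset.mem_coe.mpr hgi)
            (Finset.mem_coe.mpr hPF) (Ne.symm hPne)
        · rw [hgi]; exact Finset.disjoint_empty_left P
  · -- union
    intro i
    rw [blw_succ n ℓ hℓ]
    ext y
    rw [hF', Finset.biUnion_insert]
    simp only [id, Finset.mem_union, Finset.mem_insert, Finset.mem_biUnion,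
      Finset.mem_erase]
    constructor
    · rintro ((rfl | h) | ⟨P, ⟨-, hPF⟩, hyP⟩)
      · exact Or.inl rfl
      · exact Or.inr (hg_sub i h)
      · exact Or.inr (hF.subset i P hPF hyP)
    · rintro (rfl | hy)
      · exact Or.inl (Or.inl rfl)
      · have hyb : y ∈ (F i).biUnion id := by rw [hF.union i]; exact hy
        simp only [Finset.mem_biUnion, id] at hyb
        obtain ⟨P, hPF, hyP⟩ := hyb
        by_cases hPg : P = g i
        · exact Or.inl (Or.inr (hPg ▸ hyP))
        · exact Or.inr ⟨P, ⟨hPg, hPF⟩, hyP⟩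
  · -- parts_le
    intro i
    refine le_trans (Finset.card_insert_le _ _) ?_
    rcases hg_cases i with hgi | ⟨hgi, hlt⟩
    · rw [Finset.card_erase_of_mem hgi]
      have : 1 ≤ (F i).card := Finset.card_pos.mpr ⟨g i, hgi⟩
      have := hF.parts_le i
      omega
    · rw [hgi, Finset.erase_eq_of_notMem (hF.nonmem i)]
      omega
  · -- count
    intro S hSne hSk hSsub
    have hS1 : 1 ≤ S.card := Finset.card_pos.mpr hSne
    have hq1 : n - (ℓ+1) = q - 1 := by omega
    rw [hq1]
    rw [blw_succ n ℓ hℓ] at hSsub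
    by_cases hxS : x ∈ S
    · have key : ∀ i, S ∈ F' i ↔ g i = S.erase x := by
        intro i
        rw [hF']
        simp only [Finset.mem_insert]
        constructor
        · rintro (h | h)
          · rw [h, Finset.erase_insert (hg_x i)]
          · exact absurd (hF.subset i S (herase_sub i h) hxS) hxblw
        · intro h
          left
          rw [h, Finset.insert_erase hxS]
      rw [Finset.filter_congr (fun i _ => key i)]
      rw [hg_cnt (S.erase x) ?_]
      · rw [hd]
        simp only
        rw [Finset.card_erase_of_mem hxS]
        congr 1
        omega
      · rw [mem_Elig]
        constructor
        · intro y hy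
          have hyS := Finset.mem_of_mem_erase hy
          rcases Finset.mem_insert.mp (hSsub hyS) with h | h
          · exact absurd h (Finset.ne_of_mem_erase hy)
          · exact h
        · rw [Finset.card_erase_of_mem hxS]; omega
    · have hsub' : S ⊆ blw n ℓ := by
        intro y hy
        rcases Finset.mem_insert.mp (hSsub hy) with rfl | h
        · exact absurd hy hxS
        · exact h
      have key : ∀ i, S ∈ F' i ↔ (S ∈ F i ∧ ¬ (g i = S)) := by
        intro i
        rw [hF']
        simp only [Finset.mem_insert, Finset.mem_erase]
        constructor
        · rintro (h | ⟨h1, h2⟩)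
          · exact absurd (h ▸ hnewx i) hxS
          · exact ⟨h2, fun hh => h1 hh.symm⟩
        · rintro ⟨h1, h2⟩
          exact Or.inr ⟨fun hh => h2 hh.symm, h1⟩
      rw [Finset.filter_congr (fun i _ => key i)]
      have hsplit : (Finset.univ.filter (fun i => S ∈ F i ∧ ¬ (g i = S))).card
          + (Finset.univ.filter (fun i => g i = S)).card
          = (Finset.univ.filter (fun i => S ∈ F i)).card := by
        have h1 : Finset.univ.filter (fun i => S ∈ F i ∧ ¬ (g i = S))
            = (Finset.univ.filter (fun i => S ∈ F i)).filter (fun i => ¬ (g i = S)) := by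
          rw [Finset.filter_filter]
        have h2 : Finset.univ.filter (fun i => g i = S)
            = (Finset.univ.filter (fun i => S ∈ F i)).filter (fun i => g i = S) := by
          rw [Finset.filter_filter]
          apply Finset.filter_congr
          intro i _
          constructor
          · intro h
            refine ⟨?_, h⟩
            rcases hg_cases i with hc | ⟨hc, -⟩
            · exact h ▸ hc
            · exact absurd (h.symm.trans hc) (Finset.nonempty_iff_ne_empty.mp hSne)
          · exact fun h => h.2
        rw [h1, h2, add_comm]
        exact Finset.card_filter_add_card_filter_not (fun i => g i = S)
      have hcnt2 : (Finset.univ.filter (fun i => S ∈ F i)).card = q.choose (k - S.card) := by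
        rw [hF.count S hSne hSk hsub', ← hqdef]
      by_cases hsk : S.card < k
      · have hcnt3 : (Finset.univ.filter (fun i => g i = S)).card
            = (q-1).choose (k - S.card - 1) :=
          hg_cnt S ((mem_Elig S).mpr ⟨hsub', hsk⟩)
        have hpascal : q.choose (k - S.card)
            = (q-1).choose (k - S.card - 1) + (q-1).choose (k - S.card) := by
          have h := Nat.choose_succ_succ (q-1) (k - S.card - 1)
          rw [show (q-1).succ = q by omega,
            show (k - S.card - 1).succ = k - S.card by omega] at h
          exact h
        omega
      · have hsk' : S.card = k := by omega
        have hcnt3 : (Finset.univ.filter (fun i => g i = S)).card = 0 := by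
          rw [Finset.card_eq_zero, Finset.filter_eq_empty_iff]
          intro i _ h
          have := hg_card i
          rw [h, hsk'] at this
          omega
        have hgoal1 : (q-1).choose (k - S.card) = 1 := by
          rw [hsk', Nat.sub_self, Nat.choose_zero_right]
        have hgoal2 : q.choose (k - S.card) = 1 := by
          rw [hsk', Nat.sub_self, Nat.choose_zero_right]
        omega
  · -- total
    have hcard : ∀ i, (F' i).card = (F i).card + (if g i = ∅ then 1 else 0) := by
      intro i
      rw [hF']
      simp only
      rw [Finset.card_insert_of_notMem
        (fun hmem => (hnew_not_old i _ (herase_sub i hmem)) rfl)]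
      rcases hg_cases i with hgi | ⟨hgi, -⟩
      · have hne : g i ≠ ∅ := fun h => hF.nonmem i (h ▸ hgi)
        rw [Finset.card_erase_of_mem hgi, if_neg hne]
        have : 1 ≤ (F i).card := Finset.card_pos.mpr ⟨g i, hgi⟩
        omega
      · rw [hgi, Finset.erase_eq_of_notMem (hF.nonmem i), if_pos rfl]
    rw [Finset.sum_congr rfl (fun i _ => hcard i), Finset.sum_add_distrib, hF.total]
    have hcnt : (∑ i : Fin ((n-1).choose (k-1)), (if g i = ∅ then 1 else 0)) = d ∅ := by
      rw [← hg_cnt ∅ empty_Elig, Finset.card_filter]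
    rw [hcnt]
    have hd0 : d ∅ = (q-1).choose (k-1) := by rw [hd]; simp
    have hpascal : q.choose k = (q-1).choose (k-1) + (q-1).choose k := by
      have h := Nat.choose_succ_succ (q-1) (k-1)
      rw [show (q-1).succ = q by omega, show (k-1).succ = k by omega] at h
      exact h
    have hle : q.choose k ≤ n.choose k := Nat.choose_le_choose k (by omega)
    have hq1 : n - (ℓ+1) = q - 1 := by omega
    rw [hd0, hq1, ← hqdef]
    omega

lemma exists_good (hk : 0 < k) (hn : 0 < n) (hdvd : k ∣ n) :
    ∀ ℓ, ℓ ≤ n → ∃ F, Good n k ℓ F := by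
  intro ℓ
  induction ℓ with
  | zero => exact fun _ => ⟨_, good_zero n k hk⟩
  | succ ℓ ih =>
    intro h
    obtain ⟨F, hF⟩ := ih (by omega)
    exact good_step n k hk hn hdvd (by omega) hF

end Baranyai

theorem stmt14 (n k : ℕ) (hn : 0 < n) (hk : 0 < k) (hdvd : k ∣ n) :
    ∃ P : Fin ((n - 1).choose (k - 1)) → Finset (Finset (Fin n)),
      (∀ r, (∀ s ∈ P r, s.card = k) ∧
        ((P r : Set (Finset (Fin n))).PairwiseDisjoint id) ∧
        (P r).biUnion id = Finset.univ ∧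
        (P r).card = n / k) ∧
      (∀ s : Finset (Fin n), s.card = k → ∃! r, s ∈ P r) := by
  classical
  obtain ⟨F, hF⟩ := Baranyai.exists_good n k hk hn hdvd n le_rfl
  have hbu : ∀ r, (F r).biUnion id = Finset.univ := by
    intro r
    rw [hF.union r, Baranyai.blw_n]
  have hsum : ∀ r, ∑ P ∈ F r, P.card = n := by
    intro r
    have hcb : ((F r).biUnion id).card = ∑ P ∈ F r, (id P).card := by
      apply Finset.card_biUnion
      intro a ha b hb hab
      exact hF.disj r (by exact_mod_cast ha) (by exact_mod_cast hb) hab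
    rw [hbu r, Finset.card_univ, Fintype.card_fin] at hcb
    exact hcb.symm
  have hcards : ∀ r, (∀ s ∈ F r, s.card = k) ∧ (F r).card = n / k := by
    intro r
    have hle : ∑ P ∈ F r, P.card ≤ ∑ P ∈ F r, k :=
      Finset.sum_le_sum (fun P hP => hF.card_le r P hP)
    rw [hsum r, Finset.sum_const, smul_eq_mul] at hle
    have hkn : (n / k) * k = n := by
      rw [mul_comm]; exact Nat.mul_div_cancel' hdvd
    have h1 : (F r).card = n / k := by
      have h2 : (F r).card * k ≤ (n / k) * k :=
        Nat.mul_le_mul_right k (hF.parts_le r)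
      have h3 : (F r).card * k = (n / k) * k := by omega
      exact Nat.eq_of_mul_eq_mul_right hk h3
    refine ⟨?_, h1⟩
    intro s hs
    by_contra hne
    have hlt : s.card < k := by
      have := hF.card_le r s hs
      omega
    have : ∑ P ∈ F r, P.card < ∑ P ∈ F r, k := by
      apply Finset.sum_lt_sum (fun P hP => hF.card_le r P hP) ⟨s, hs, hlt⟩
    rw [hsum r, Finset.sum_const, smul_eq_mul, h1] at this
    omega
  refine ⟨F, fun r => ⟨(hcards r).1, hF.disj r, hbu r, (hcards r).2⟩, ?_⟩
  intro s hs
  have hcnt := hF.count s (Finset.card_pos.mp (by omega)) (le_of_eq hs)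
    (Baranyai.blw_n n ▸ Finset.subset_univ s)
  rw [hs, Nat.sub_self, Nat.sub_self, Nat.choose_zero_right] at hcnt
  obtain ⟨r, hr⟩ := Finset.card_eq_one.mp hcnt
  refine ⟨r, ?_, ?_⟩
  · have : r ∈ Finset.univ.filter (fun i => s ∈ F i) := hr ▸ Finset.mem_singleton_self r
    exact (Finset.mem_filter.mp this).2
  · intro r' hr'
    have : r' ∈ Finset.univ.filter (fun i => s ∈ F i) :=
      Finset.mem_filter.mpr ⟨Finset.mem_univ r', hr'⟩
    rw [hr] at this
    exact Finset.mem_singleton.mp this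
end

section
/- Let (u_k)_{k≥0} be a bounded complex sequence such that (1/n)Σ_{k=0}^{n−1} u_k → μ as n → ∞. Then ∏_{k=0}^{n−1} (1 + u_k/n) → e^μ as n → ∞. -/
open Filter

theorem stmt17 (u : ℕ → ℂ) (M : ℝ) (hbd : ∀ k, ‖u k‖ ≤ M) (μ : ℂ)
    (hmean : Tendsto (fun n : ℕ => (n : ℂ)⁻¹ * ∑ k ∈ Finset.range n, u k) atTop (nhds μ)) :
    Tendsto (fun n : ℕ => ∏ k ∈ Finset.range n, (1 + u k / n)) atTop (nhds (Complex.exp μ)) := by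
  have hM0 : 0 ≤ M := le_trans (norm_nonneg (u 0)) (hbd 0)
  -- eventually n ≥ 2M+1, so ‖u k / n‖ ≤ 1/2
  have hev : ∀ᶠ n : ℕ in atTop, ∀ k, ‖u k / (n : ℂ)‖ ≤ 1/2 := by
    filter_upwards [eventually_ge_atTop (⌈2*M⌉₊ + 1)] with n hn k
    have hn1 : (1 : ℝ) ≤ n := by exact_mod_cast Nat.one_le_iff_ne_zero.mpr (by omega)
    have h2M : 2*M ≤ n := le_trans (Nat.le_ceil _) (by exact_mod_cast Nat.le_of_succ_le hn)
    rw [norm_div, Complex.norm_natCast]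
    rw [div_le_iff₀ (by linarith)]
    calc ‖u k‖ ≤ M := hbd k
      _ ≤ 1/2 * n := by linarith
  -- the sum of logs tends to μ
  have hlog : Tendsto (fun n : ℕ => ∑ k ∈ Finset.range n, Complex.log (1 + u k / n))
      atTop (nhds μ) := by
    have hdiff : Tendsto (fun n : ℕ =>
        ∑ k ∈ Finset.range n, (Complex.log (1 + u k / n) - u k / n)) atTop (nhds 0) := by
      refine squeeze_zero_norm' (a := fun n : ℕ => M^2 / n) ?_ ?_
      · filter_upwards [hev, eventually_gt_atTop 0] with n hn hn0
        calc ‖∑ k ∈ Finset.range n, (Complex.log (1 + u k / n) - u k / n)‖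
            ≤ ∑ k ∈ Finset.range n, ‖Complex.log (1 + u k / n) - u k / n‖ :=
              norm_sum_le _ _
          _ ≤ ∑ _k ∈ Finset.range n, (M/n)^2 := by
              apply Finset.sum_le_sum
              intro k _
              have h1 := Complex.norm_log_one_add_sub_self_le
                (z := u k / n) (lt_of_le_of_lt (hn k) (by norm_num))
              have h2 : (1 - ‖u k / (n:ℂ)‖)⁻¹ ≤ 2 := by
                rw [inv_le_comm₀ (by linarith [hn k]) (by norm_num)]
                linarith [hn k]
              have h3 : ‖u k / (n:ℂ)‖ ≤ M / n := by
                rw [norm_div, Complex.norm_natCast]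
                exact div_le_div_of_nonneg_right (hbd k) (by exact_mod_cast hn0.le)
              calc ‖Complex.log (1 + u k / n) - u k / n‖
                  ≤ ‖u k / (n:ℂ)‖ ^ 2 * (1 - ‖u k / (n:ℂ)‖)⁻¹ / 2 := h1
                _ ≤ ‖u k / (n:ℂ)‖ ^ 2 * 2 / 2 := by
                    apply div_le_div_of_nonneg_right _ (by norm_num)
                    exact mul_le_mul_of_nonneg_left h2 (sq_nonneg _)
                _ = ‖u k / (n:ℂ)‖ ^ 2 := by ring
                _ ≤ (M/n)^2 := by
                    apply pow_le_pow_left₀ (norm_nonneg _) h3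
          _ = n * (M/n)^2 := by rw [Finset.sum_const, Finset.card_range, nsmul_eq_mul]
          _ = M^2 / n := by
              field_simp
      · have : Tendsto (fun n : ℕ => M^2 / (n:ℝ)) atTop (nhds 0) :=
          tendsto_const_nhds.div_atTop tendsto_natCast_atTop_atTop
        exact this
    have hsum : Tendsto (fun n : ℕ => ∑ k ∈ Finset.range n, u k / (n:ℂ)) atTop (nhds μ) := by
      refine hmean.congr fun n => ?_
      rw [Finset.mul_sum]
      exact Finset.sum_congr rfl fun k _ => (div_eq_inv_mul _ _).symm
    have := hdiff.add hsum
    rw [zero_add] at this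
    refine this.congr fun n => ?_
    rw [← Finset.sum_add_distrib]
    congr 1; ext k; ring
  have hfinal := (Complex.continuous_exp.continuousAt (x := μ)).tendsto.comp hlog
  refine Tendsto.congr' ?_ hfinal
  filter_upwards [hev] with n hn
  rw [Function.comp_apply, Complex.exp_sum]
  apply Finset.prod_congr rfl
  intro k _
  rw [Complex.exp_log]
  intro h
  have h' : u k / (n:ℂ) = -1 := by linear_combination h
  have : ‖u k / (n:ℂ)‖ = 1 := by rw [h']; simp
  linarith [hn k]
end
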